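/- Let (Λ, 𝒜, μ) be a measure space and H₀ a separable complex Hilbert space. If Φ ∈ L¹(Λ, 𝒜, S₁⁺(H₀), μ), i.e. Φ is a Bochner-integrable function with values in the positive trace-class operators on H₀, then the pointwise square root Φ^{1/2} : λ ↦ Φ(λ)^{1/2} is measurable as an S₂(H₀)-valued function and belongs to L²(Λ, 𝒜, S₂(H₀), μ), with ‖Φ^{1/2}(λ)‖₂² = ‖Φ(λ)‖₁ for all λ. -/

import Mathlib

noncomputable section
open MeasureTheory Filter Topology ENNReal

namespace OVM

local notation "⟪" x ", " y "⟫" => @inner ℂ _ _ x y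

section Basic

variable {Λ H G I H' : Type*}
  [NormedAddCommGroup H] [InnerProductSpace ℂ H]
  [NormedAddCommGroup G] [InnerProductSpace ℂ G]
  [NormedAddCommGroup I] [InnerProductSpace ℂ I]
  [NormedAddCommGroup H'] [InnerProductSpace ℂ H']

/-- Trace norm of a raw map between inner product spaces, via the variational formula
`‖T‖₁ = sup ∑ᵢ |⟪f i, T (e i)⟫|` over finite orthonormal families `e`, `f`. -/
def traceNormFn (T : H → G) : ℝ≥0∞ :=
  ⨆ (n : ℕ) (e : Fin n → H) (f : Fin n → G) (_ : Orthonormal ℂ e) (_ : Orthonormal ℂ f),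
    ∑ i, ENNReal.ofReal ‖⟪f i, T (e i)⟫‖

/-- Squared Hilbert–Schmidt norm of a raw map, `‖T‖₂² = sup ∑ᵢ ‖T (e i)‖²`. -/
def hsNormSqFn (T : H → G) : ℝ≥0∞ :=
  ⨆ (n : ℕ) (e : Fin n → H) (_ : Orthonormal ℂ e),
    ∑ i, ENNReal.ofReal (‖T (e i)‖ ^ 2)

variable (H) in
/-- A fixed Hilbert basis index set for `H` (as a subset of `H`). -/
def hbIndex [CompleteSpace H] : Set H := (exists_hilbertBasis ℂ H).choose

/-- The trace of a (trace-class) raw map, computed in a fixed Hilbert basis. -/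
def traceFn [CompleteSpace H] (T : H → H) : ℂ :=
  ∑' i : hbIndex H, ⟪(i : H), T (i : H)⟫

/-- The raw map `A B*` for Hilbert–Schmidt `A, B`, computed in a fixed Hilbert basis of the
common domain: `(A B*) y = ∑ᵢ ⟪B eᵢ, y⟫ • A eᵢ`. -/
def rawMulAdj [CompleteSpace H] (A : H → G) (B : H → I) (y : I) : G :=
  ∑' i : hbIndex H, ⟪B (i : H), y⟫ • A (i : H)

/-- Composition of a partially defined operator with an everywhere defined one,
with junk value `0` outside the domain. -/
def pcompFun (T : H →ₗ.[ℂ] G) (S : H' →L[ℂ] H) : H' → G := fun x =>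
  letI := Classical.dec (S x ∈ T.domain)
  if h : S x ∈ T.domain then T ⟨S x, h⟩ else 0

/-- Left module action of a bounded operator on a partially defined operator. -/
def lsmulP (P : G →L[ℂ] I) (T : H →ₗ.[ℂ] G) : H →ₗ.[ℂ] I :=
  ⟨T.domain, P.toLinearMap.comp T.toFun⟩

end Basic

section Meas

variable {Λ H G I : Type*} [MeasurableSpace Λ]
  [NormedAddCommGroup H] [InnerProductSpace ℂ H]
  [NormedAddCommGroup G] [InnerProductSpace ℂ G]
  [NormedAddCommGroup I] [InnerProductSpace ℂ I]

/-- Simple (pointwise) measurability of an operator-valued function. -/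
def SimplyMeasurable (Φ : Λ → H →L[ℂ] G) : Prop :=
  ∀ x : H, StronglyMeasurable fun l => Φ l x

/-- `𝒪`-measurability of a function valued in (possibly unbounded) operators. -/
def OMeasurable (Φ : Λ → H →ₗ.[ℂ] G) : Prop :=
  (∀ x : H, MeasurableSet {l | x ∈ (Φ l).domain}) ∧
  ∃ Φn : ℕ → Λ → H →L[ℂ] G, (∀ n, SimplyMeasurable (Φn n)) ∧
    ∀ l : Λ, ∀ x : (Φ l).domain, Tendsto (fun n => Φn n l (x : H)) atTop (𝓝 (Φ l x))

end Meas

section PV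

variable {Λ : Type*} [MeasurableSpace Λ] {H : Type*}
  [NormedAddCommGroup H] [InnerProductSpace ℂ H] [CompleteSpace H]

/-- A positive operator valued measure on `(Λ, 𝒜, H)`: positive-operator-valued,
countably additive in the weak operator topology. -/
structure POVM (Λ : Type*) [MeasurableSpace Λ] (H : Type*) [NormedAddCommGroup H]
    [InnerProductSpace ℂ H] [CompleteSpace H] where
  toFun : Set Λ → H →L[ℂ] H
  pos' : ∀ A : Set Λ, MeasurableSet A → (toFun A).IsPositive
  iUnion' : ∀ A : ℕ → Set Λ, (∀ n, MeasurableSet (A n)) →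
    (Pairwise fun m n => Disjoint (A m) (A n)) →
    ∀ x y : H, HasSum (fun n => ⟪y, toFun (A n) x⟫) ⟪y, toFun (⋃ n, A n) x⟫

/-- A p.o.v.m. is trace-class if all its values are trace-class operators. -/
def POVM.TraceClass (ν : POVM Λ H) : Prop :=
  ∀ A : Set Λ, MeasurableSet A → traceNormFn (fun x => ν.toFun A x) < ⊤

/-- The variation (as an `ℝ≥0∞`-valued set function) of a trace-class p.o.v.m., defined as the
supremum over countable measurable partitions of `A` of the sums of trace norms. -/
def variationFn (ν : POVM Λ H) (A : Set Λ) : ℝ≥0∞ :=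
  ⨆ (P : ℕ → Set Λ) (_ : ∀ n, MeasurableSet (P n))
    (_ : Pairwise fun m n => Disjoint (P m) (P n)) (_ : (⋃ n, P n) = A),
    ∑' n, traceNormFn (fun x => ν.toFun (P n) x)

/-- `μ₁` is the variation measure `‖ν‖₁ : A ↦ ‖ν(A)‖₁` of the trace-class p.o.v.m. `ν`. -/
def IsVariationMeasure (ν : POVM Λ H) (μ₁ : Measure Λ) : Prop :=
  ∀ A : Set Λ, MeasurableSet A → μ₁ A = traceNormFn (fun x => ν.toFun A x)

/-- `g` is a density (Radon–Nikodym derivative) of the trace-class p.o.v.m. `ν` with respect to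
`μ`, i.e. `g ∈ L¹(Λ, 𝒜, S₁(H), μ)` and `ν(A) = ∫_A g dμ` for all measurable `A`. -/
def IsDensity (ν : POVM Λ H) (μ : Measure Λ) (g : Λ → H →L[ℂ] H) : Prop :=
  (∀ x : H, StronglyMeasurable fun l => g l x) ∧
  (∫⁻ l, traceNormFn (fun x => g l x) ∂μ) < ⊤ ∧
  ∀ A : Set Λ, MeasurableSet A → ∀ x y : H, ⟪y, ν.toFun A x⟫ = ∫ l in A, ⟪y, g l x⟫ ∂μ

/-- `s` is the pointwise positive square root of the operator-valued function `g`. -/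
def IsSqrtFun (g s : Λ → H →L[ℂ] H) : Prop :=
  ∀ l, (s l).IsPositive ∧ (s l).comp (s l) = g l

/-- The scalar measure `ν_x : A ↦ ⟨ν(A)x, x⟩` associated to a p.o.v.m. -/
def IsDiagMeasure (ν : POVM Λ H) (x : H) (m : Measure Λ) : Prop :=
  ∀ A : Set Λ, MeasurableSet A → m A = ENNReal.ofReal (⟪x, ν.toFun A x⟫).re

end PV

section Reg

variable {Λ : Type*} [TopologicalSpace Λ] [MeasurableSpace Λ]

/-- Regularity of an `ℝ≥0∞`-valued set function: every measurable set can be approximated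
from inside by compact sets and from outside by open sets. -/
def RegularFn (μ : Set Λ → ℝ≥0∞) : Prop :=
  ∀ A : Set Λ, MeasurableSet A → ∀ ε : ℝ≥0∞, 0 < ε →
    ∃ K U : Set Λ, IsCompact K ∧ IsOpen U ∧ K ⊆ A ∧ A ⊆ U ∧ μ (U \ K) ≤ ε

end Reg

section L2O

variable {Λ H G I : Type*} [MeasurableSpace Λ]
  [NormedAddCommGroup H] [InnerProductSpace ℂ H] [CompleteSpace H]
  [NormedAddCommGroup G] [InnerProductSpace ℂ G]
  [NormedAddCommGroup I] [InnerProductSpace ℂ I]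

/-- The squared Gramian (semi-)norm `‖Θ‖²_ν = ∫ ‖Θ(λ) s(λ)‖₂² dμ₁` on operator valued
functions, where `μ₁ = ‖ν‖₁` and `s = (dν/dμ₁)^{1/2}`. -/
def gramNormSq (μ₁ : Measure Λ) (s : Λ → H →L[ℂ] H) (Θ : Λ → H →ₗ.[ℂ] G) : ℝ≥0∞ :=
  ∫⁻ l, hsNormSqFn (pcompFun (Θ l) (s l)) ∂μ₁

/-- Membership in `𝓛²(Λ, 𝒜, 𝒪(H,G), ν)`, where `μ₁ = ‖ν‖₁` and `s = (dν/dμ₁)^{1/2}`: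
`Θ` is `𝒪`-measurable, `Im s(λ) ⊆ D(Θ(λ))` a.e., `Θ(λ)s(λ)` is Hilbert–Schmidt a.e., and
`(Θs)(Θs)*` is integrable in trace norm. -/
def MemL2O (μ₁ : Measure Λ) (s : Λ → H →L[ℂ] H) (Θ : Λ → H →ₗ.[ℂ] G) : Prop :=
  OMeasurable Θ ∧
  (∀ᵐ l ∂μ₁, ∀ x : H, s l x ∈ (Θ l).domain) ∧
  (∀ᵐ l ∂μ₁, hsNormSqFn (pcompFun (Θ l) (s l)) < ⊤) ∧
  gramNormSq μ₁ s Θ < ⊤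

/-- The pair `(Φ, Ψ)` is `ν`-integrable (`μ₁ = ‖ν‖₁`, `s = (dν/dμ₁)^{1/2}`). -/
def PairIntegrable (μ₁ : Measure Λ) (s : Λ → H →L[ℂ] H)
    (Φ : Λ → H →ₗ.[ℂ] G) (Ψ : Λ → H →ₗ.[ℂ] I) : Prop :=
  (∀ᵐ l ∂μ₁, (∀ x : H, s l x ∈ (Φ l).domain) ∧ (∀ x : H, s l x ∈ (Ψ l).domain)) ∧
  (∀ᵐ l ∂μ₁, hsNormSqFn (pcompFun (Φ l) (s l)) < ⊤ ∧ hsNormSqFn (pcompFun (Ψ l) (s l)) < ⊤) ∧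
  (∫⁻ l, traceNormFn (rawMulAdj (pcompFun (Φ l) (s l)) (pcompFun (Ψ l) (s l))) ∂μ₁) < ⊤

/-- Weak characterization of the `S₁`-valued integral `C = ∫_A Φ dν Ψ*`
(`μ₁ = ‖ν‖₁`, `s = (dν/dμ₁)^{1/2}`). -/
def IsPairIntegralOn (μ₁ : Measure Λ) (s : Λ → H →L[ℂ] H)
    (Φ : Λ → H →ₗ.[ℂ] G) (Ψ : Λ → H →ₗ.[ℂ] I) (A : Set Λ) (C : I →L[ℂ] G) : Prop :=
  ∀ (y : I) (x : G),
    ⟪x, C y⟫ = ∫ l in A, ⟪x, rawMulAdj (pcompFun (Φ l) (s l)) (pcompFun (Ψ l) (s l)) y⟫ ∂μ₁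

/-- The simple operator-valued function `1_A P` (with full domain). -/
def indSimple (A : Set Λ) (P : H →L[ℂ] G) : Λ → H →ₗ.[ℂ] G := fun l =>
  letI := Classical.dec (l ∈ A)
  if l ∈ A then P.toLinearMap.toPMap ⊤ else (0 : H →ₗ.[ℂ] G)

end L2O

section RV

variable {Ω : Type*} [MeasurableSpace Ω] {H G I : Type*}
  [NormedAddCommGroup H] [InnerProductSpace ℂ H]
  [NormedAddCommGroup G] [InnerProductSpace ℂ G]
  [NormedAddCommGroup I] [InnerProductSpace ℂ I]

/-- `C` is the covariance operator of the centered square-integrable random variables `Y, Z`: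
`⟨x, C y⟩ = E[⟨x, Y⟩ conj ⟨y, Z⟩]`. -/
def covEq (ℙ : Measure Ω) (Y : Ω → H) (Z : Ω → G) (C : G →L[ℂ] H) : Prop :=
  ∀ (x : H) (y : G), ⟪x, C y⟫ = ∫ ω, ⟪x, Y ω⟫ * (starRingEnd ℂ) ⟪y, Z ω⟫ ∂ℙ

end RV

section Cagos

variable {Λ : Type*} [MeasurableSpace Λ] {Ω : Type*} [MeasurableSpace Ω]
  {H G : Type*} [NormedAddCommGroup H] [InnerProductSpace ℂ H]
  [NormedAddCommGroup G] [InnerProductSpace ℂ G]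

/-- An `H`-valued random countably additive Gramian-orthogonally scattered (c.a.g.o.s.)
measure on `(Λ, 𝒜, Ω, ℱ, ℙ)`. -/
structure CAGOS (Λ : Type*) [MeasurableSpace Λ] (Ω : Type*) [MeasurableSpace Ω]
    (ℙ : Measure Ω) (H : Type*) [NormedAddCommGroup H] [InnerProductSpace ℂ H] where
  toFun : Set Λ → Ω → H
  memL2' : ∀ A : Set Λ, MeasurableSet A → MemLp (toFun A) 2 ℙ
  centered' : ∀ A : Set Λ, MeasurableSet A → ∫ ω, toFun A ω ∂ℙ = 0
  iUnion' : ∀ A : ℕ → Set Λ, (∀ n, MeasurableSet (A n)) →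
    (Pairwise fun m n => Disjoint (A m) (A n)) →
    Tendsto (fun N : ℕ =>
        eLpNorm (fun ω => toFun (⋃ n, A n) ω - ∑ n ∈ Finset.range N, toFun (A n) ω) 2 ℙ)
      atTop (𝓝 0)
  orth' : ∀ A B : Set Λ, MeasurableSet A → MeasurableSet B → Disjoint A B →
    ∀ x y : H, ∫ ω, ⟪x, toFun A ω⟫ * (starRingEnd ℂ) ⟪y, toFun B ω⟫ ∂ℙ = 0

variable [CompleteSpace H] {ℙ : Measure Ω}

/-- The p.o.v.m. `ν` is the intensity operator measure of the random c.a.g.o.s. measure `W`,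
i.e. `ν(A) = Cov(W(A), W(A))`. -/
def CAGOS.HasIntensity (W : CAGOS Λ Ω ℙ H) (ν : POVM Λ H) : Prop :=
  ∀ A : Set Λ, MeasurableSet A → covEq ℙ (W.toFun A) (W.toFun A) (ν.toFun A)

/-- A random c.a.g.o.s. measure is regular when the finite measure
`‖ν_W‖₁ : A ↦ E‖W(A)‖² ` is regular. -/
def CAGOS.Regular [TopologicalSpace Λ] (W : CAGOS Λ Ω ℙ H) : Prop :=
  RegularFn fun A : Set Λ => (eLpNorm (W.toFun A) 2 ℙ) ^ (2 : ℕ)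

/-- `Y = ∫ φ dW` for a bounded scalar function `φ`: `Y` is approximated in `L²(Ω; H)` by the
integrals `∑ cᵢ W(Aᵢ)` of simple functions uniformly approximating `φ`. -/
def IsScalarCagosIntegral (W : CAGOS Λ Ω ℙ H) (φ : Λ → ℂ) (Y : Ω → H) : Prop :=
  ∀ ε : ℝ, 0 < ε → ∃ (n : ℕ) (c : Fin n → ℂ) (A : Fin n → Set Λ),
    (∀ i, MeasurableSet (A i)) ∧
    (∀ l : Λ, ‖φ l - ∑ i, (A i).indicator (fun _ => c i) l‖ ≤ ε) ∧
    eLpNorm (fun ω => Y ω - ∑ i, c i • W.toFun (A i) ω) 2 ℙ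
      ≤ ENNReal.ofReal ε * eLpNorm (W.toFun Set.univ) 2 ℙ

variable (G) in
/-- The `G`-valued modular time domain of a random c.a.g.o.s. measure `W`: the closed linear
span in `L²(Ω; G)` of `{P W(A) : P ∈ L_b(H,G), A ∈ 𝒜}`. -/
def timeDomainW (W : CAGOS Λ Ω ℙ H) : Set (Lp G 2 ℙ) :=
  closure (Submodule.span ℂ {v : Lp G 2 ℙ | ∃ P : H →L[ℂ] G, ∃ A : Set Λ,
    MeasurableSet A ∧ (v : Ω → G) =ᵐ[ℙ] fun ω => P (W.toFun A ω)} : Set (Lp G 2 ℙ))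

/-- `J` is the Gramian-isometric integral map `I_W : L²(Λ,𝒜,𝒪(H,G),ν_W) → M(Ω,ℱ,G,ℙ)`
associated with the random c.a.g.o.s. measure `W` (with `μ₁ = ‖ν_W‖₁` and
`s = (dν_W/dμ₁)^{1/2}`). -/
def IsGramianIntegralMap (W : CAGOS Λ Ω ℙ H) (μ₁ : Measure Λ) (s : Λ → H →L[ℂ] H)
    (J : (Λ → H →ₗ.[ℂ] G) → Ω → G) : Prop :=
  (∀ Φ, MemL2O μ₁ s Φ → MemLp (J Φ) 2 ℙ ∧ ∫ ω, J Φ ω ∂ℙ = 0) ∧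
  (∀ Φ Ψ, MemL2O μ₁ s Φ → MemL2O μ₁ s Ψ →
    J (fun l => Φ l + Ψ l) =ᵐ[ℙ] fun ω => J Φ ω + J Ψ ω) ∧
  (∀ Φ, MemL2O μ₁ s Φ → ∀ P : G →L[ℂ] G,
    J (fun l => lsmulP P (Φ l)) =ᵐ[ℙ] fun ω => P (J Φ ω)) ∧
  (∀ Φ Ψ, MemL2O μ₁ s Φ → MemL2O μ₁ s Ψ → ∀ x y : G,
    ∫ ω, ⟪x, J Φ ω⟫ * (starRingEnd ℂ) ⟪y, J Ψ ω⟫ ∂ℙ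
      = ∫ l, ⟪x, rawMulAdj (pcompFun (Φ l) (s l)) (pcompFun (Ψ l) (s l)) y⟫ ∂μ₁) ∧
  (∀ A : Set Λ, MeasurableSet A → ∀ P : H →L[ℂ] G,
    J (indSimple A P) =ᵐ[ℙ] fun ω => P (W.toFun A ω))

end Cagos

section Char

/-- A continuous character of a topological Abelian group `𝔾`: a continuous map `χ : 𝔾 → ℂ`
of modulus one with `χ(s+t) = χ(s)χ(t)`. The type of all such characters is the dual group. -/
structure GChar (𝔾 : Type*) [AddCommGroup 𝔾] [TopologicalSpace 𝔾] where
  toFun : 𝔾 → ℂ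
  continuous_toFun : Continuous toFun
  norm_eq_one' : ∀ t, ‖toFun t‖ = 1
  map_add_eq_mul' : ∀ s t, toFun (s + t) = toFun s * toFun t

variable {𝔾 : Type*} [AddCommGroup 𝔾] [TopologicalSpace 𝔾]

instance : FunLike (GChar 𝔾) 𝔾 ℂ where
  coe := GChar.toFun
  coe_injective := by
    rintro ⟨f, _, _, _⟩ ⟨g, _, _, _⟩ h
    simpa using h

/-- The dual group carries the compact-open topology, induced from `C(𝔾, ℂ)`. -/
instance : TopologicalSpace (GChar 𝔾) :=
  TopologicalSpace.induced
    (fun χ : GChar 𝔾 => (⟨χ.toFun, χ.continuous_toFun⟩ : C(𝔾, ℂ))) inferInstance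

/-- The dual group is endowed with its Borel σ-field. -/
instance : MeasurableSpace (GChar 𝔾) := borel (GChar 𝔾)

end Char

section Stat

variable {𝔾 : Type*} [AddCommGroup 𝔾] [TopologicalSpace 𝔾]
  {Ω : Type*} [MeasurableSpace Ω]
  {H : Type*} [NormedAddCommGroup H] [InnerProductSpace ℂ H] [CompleteSpace H]

/-- A centered weakly stationary `H`-valued process indexed by the l.c.a. group `𝔾`:
square-integrable centered variables, shift-invariant covariance structure, and the
autocovariance operator function `Γ(h) = Cov(X_h, X_0)` satisfies that
`h ↦ Tr(P Γ(h))` is continuous for every bounded `P`. -/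
def CenteredWeaklyStationary (ℙ : Measure Ω) (X : 𝔾 → Ω → H) : Prop :=
  (∀ t, MemLp (X t) 2 ℙ) ∧
  (∀ t, ∫ ω, X t ω ∂ℙ = 0) ∧
  (∀ t h : 𝔾, ∀ x y : H,
    ∫ ω, ⟪x, X (t + h) ω⟫ * (starRingEnd ℂ) ⟪y, X t ω⟫ ∂ℙ
      = ∫ ω, ⟪x, X h ω⟫ * (starRingEnd ℂ) ⟪y, X 0 ω⟫ ∂ℙ) ∧
  (∃ Γ : 𝔾 → H →L[ℂ] H, (∀ h, covEq ℙ (X h) (X 0) (Γ h)) ∧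
    ∀ P : H →L[ℂ] H, Continuous fun h : 𝔾 => traceFn (fun v => P (Γ h v)))

variable {G : Type*} [NormedAddCommGroup G] [InnerProductSpace ℂ G]

variable (G) in
/-- The `G`-valued modular time domain of a process `X`: the closed linear span in `L²(Ω; G)`
of `{P X_t : P ∈ L_b(H,G), t ∈ 𝔾}`. -/
def timeDomainProc (ℙ : Measure Ω) (X : 𝔾 → Ω → H) : Set (Lp G 2 ℙ) :=
  closure (Submodule.span ℂ {v : Lp G 2 ℙ | ∃ P : H →L[ℂ] G, ∃ t : 𝔾,
    (v : Ω → G) =ᵐ[ℙ] fun ω => P (X t ω)} : Set (Lp G 2 ℙ))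

end Stat

section PComp

variable {H G I : Type*}
  [NormedAddCommGroup H] [InnerProductSpace ℂ H]
  [NormedAddCommGroup G] [InnerProductSpace ℂ G]
  [NormedAddCommGroup I] [InnerProductSpace ℂ I]

/-- The domain of the composition of partially defined operators. -/
def pcompDomain (T : G →ₗ.[ℂ] I) (S : H →ₗ.[ℂ] G) : Submodule ℂ H where
  carrier := {x : H | ∃ hx : x ∈ S.domain, S ⟨x, hx⟩ ∈ T.domain}
  add_mem' := by
    rintro a b ⟨ha, ha'⟩ ⟨hb, hb'⟩
    refine ⟨S.domain.add_mem ha hb, ?_⟩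
    have h : S ⟨a + b, S.domain.add_mem ha hb⟩ = S ⟨a, ha⟩ + S ⟨b, hb⟩ := by
      rw [show (⟨a + b, S.domain.add_mem ha hb⟩ : S.domain) = ⟨a, ha⟩ + ⟨b, hb⟩ from rfl,
        S.map_add]
    rw [h]
    exact T.domain.add_mem ha' hb'
  zero_mem' := by
    refine ⟨S.domain.zero_mem, ?_⟩
    have h : S ⟨0, S.domain.zero_mem⟩ = 0 := by
      rw [show (⟨0, S.domain.zero_mem⟩ : S.domain) = 0 from rfl]
      exact S.map_zero
    rw [h]
    exact T.domain.zero_mem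
  smul_mem' := by
    rintro c a ⟨ha, ha'⟩
    refine ⟨S.domain.smul_mem c ha, ?_⟩
    have h : S ⟨c • a, S.domain.smul_mem c ha⟩ = c • S ⟨a, ha⟩ := by
      rw [show (⟨c • a, S.domain.smul_mem c ha⟩ : S.domain) = c • ⟨a, ha⟩ from rfl,
        S.map_smul]
    rw [h]
    exact T.domain.smul_mem c ha'

theorem pcompDomain_mem {T : G →ₗ.[ℂ] I} {S : H →ₗ.[ℂ] G} {x : H} :
    x ∈ pcompDomain T S ↔ ∃ hx : x ∈ S.domain, S ⟨x, hx⟩ ∈ T.domain := Iff.rfl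

/-- The inclusion of the composition domain into the domain of `S`. -/
def pcompIota (T : G →ₗ.[ℂ] I) (S : H →ₗ.[ℂ] G) : pcompDomain T S →ₗ[ℂ] S.domain where
  toFun x := ⟨(x : H), x.property.choose⟩
  map_add' _ _ := Subtype.ext rfl
  map_smul' _ _ := Subtype.ext rfl

/-- Pointwise composition `T ∘ S` of partially defined operators, with domain
`{x ∈ D(S) : S x ∈ D(T)}`. -/
def pmapComp (T : G →ₗ.[ℂ] I) (S : H →ₗ.[ℂ] G) : H →ₗ.[ℂ] I where
  domain := pcompDomain T S
  toFun := T.toFun.comp (LinearMap.codRestrict T.domain (S.toFun.comp (pcompIota T S))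
    fun x => x.property.choose_spec)


/-- Pointwise inverse of a partially defined operator: if `T` is injective, the inverse of
`T : D(T) → Im(T)` with domain `Im(T)`; the zero operator otherwise. -/
def pinvP (T : H →ₗ.[ℂ] G) : G →ₗ.[ℂ] H :=
  letI := Classical.dec (Function.Injective T.toFun)
  if h : Function.Injective T.toFun then
    ⟨LinearMap.range T.toFun,
      T.domain.subtype.comp (LinearEquiv.ofInjective T.toFun h).symm.toLinearMap⟩
  else (0 : G →ₗ.[ℂ] H)

end PComp

section Gauss

variable {Ω : Type*} [MeasurableSpace Ω]

/-- A centered circularly-symmetric complex Gaussian random variable: all rotations have the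
same centered real Gaussian law of real parts. -/
def IsCGaussian (ℙ : Measure Ω) (Z : Ω → ℂ) : Prop :=
  ∃ v : NNReal, ∀ c : ℂ, ‖c‖ = 1 →
    MeasureTheory.Measure.map (fun ω => (c * Z ω).re) ℙ = ProbabilityTheory.gaussianReal 0 v

end Gauss

section RankOne

variable {H : Type*} [NormedAddCommGroup H] [InnerProductSpace ℂ H] [CompleteSpace H]

/-- The rank-one operator `x ⊗ y : z ↦ ⟨z, y⟩ x` (inner product linear in `z`). -/
def rankOne (x y : H) : H →L[ℂ] H := (innerSL ℂ y).smulRight x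

end RankOne


section SqrtAux

variable {Λ : Type*} [MeasurableSpace Λ] {H : Type*}
  [NormedAddCommGroup H] [InnerProductSpace ℂ H]

open Polynomial in
lemma sm_op_apply (Φ : Λ → H →L[ℂ] H)
    (hmeas : ∀ x : H, StronglyMeasurable fun l => Φ l x) {g : Λ → H}
    (hg : StronglyMeasurable g) : StronglyMeasurable fun l => Φ l (g l) := by
  have key : ∀ φ : SimpleFunc Λ H, StronglyMeasurable fun l => Φ l (φ l) := by
    intro φ
    induction φ using SimpleFunc.induction with
    | @const c s hs =>
      have heq : (fun l => Φ l ((SimpleFunc.piecewise s hs (SimpleFunc.const _ c)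
          (SimpleFunc.const _ 0)) l)) = fun l => s.indicator (fun l => Φ l c) l := by
        funext l
        by_cases hl : l ∈ s <;>
          simp [SimpleFunc.piecewise_apply, Set.indicator, hl]
      rw [heq]
      exact (hmeas c).indicator hs
    | @add f g' _ hf hg' =>
      have heq : (fun l => Φ l ((f + g') l)) = fun l => Φ l (f l) + Φ l (g' l) := by
        funext l; simp
      rw [heq]
      exact hf.add hg'
  exact stronglyMeasurable_of_tendsto atTop (fun n => key (hg.approx n))
    (tendsto_pi_nhds.mpr fun l => ((Φ l).continuous.tendsto _).comp (hg.tendsto_approx l))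

lemma sm_pow_apply (Φ : Λ → H →L[ℂ] H)
    (hmeas : ∀ x : H, StronglyMeasurable fun l => Φ l x) (k : ℕ) (x : H) :
    StronglyMeasurable fun l => (Φ l ^ k) x := by
  induction k with
  | zero =>
    simp only [pow_zero, ContinuousLinearMap.one_apply]
    exact stronglyMeasurable_const
  | succ k ih =>
    have heq : (fun l => (Φ l ^ (k + 1)) x) = fun l => Φ l ((Φ l ^ k) x) := by
      funext l; rw [pow_succ']; rfl
    rw [heq]
    exact sm_op_apply Φ hmeas ih

open Polynomial in
lemma sm_aeval_apply (Φ : Λ → H →L[ℂ] H)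
    (hmeas : ∀ x : H, StronglyMeasurable fun l => Φ l x) (q : ℝ[X]) (x : H) :
    StronglyMeasurable fun l => (aeval (Φ l) q) x := by
  have heq : (fun l => (aeval (Φ l) q) x)
      = fun l => ∑ i ∈ Finset.range (q.natDegree + 1), q.coeff i • ((Φ l ^ i) x) := by
    funext l
    rw [Polynomial.aeval_eq_sum_range]
    simp
  rw [heq]
  exact Finset.stronglyMeasurable_fun_sum _ fun i _ => (sm_pow_apply Φ hmeas i x).const_smul (q.coeff i)

lemma isPositive_sqrt_eq_cfc {H : Type*} [NormedAddCommGroup H] [InnerProductSpace ℂ H]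
    [CompleteSpace H] {T S : H →L[ℂ] H} (hS : S.IsPositive) (hSS : S.comp S = T) :
    S = cfc Real.sqrt T := by
  have hS0 : (0 : H →L[ℂ] H) ≤ S := (ContinuousLinearMap.nonneg_iff_isPositive S).mpr hS
  have hSsa : IsSelfAdjoint S := hS.isSelfAdjoint
  have hT : T = cfc (fun t : ℝ => t * t) S := by
    rw [cfc_mul _ _ S (by fun_prop) (by fun_prop), cfc_id' ℝ S, ← hSS]
    rfl
  have h2 : cfc (Real.sqrt <| (fun t : ℝ => t * t) ·) S = S := by
    rw [cfc_congr (g := fun t : ℝ => t)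
      fun t ht => Real.sqrt_mul_self (spectrum_nonneg_of_nonneg hS0 ht), cfc_id' ℝ S]
  rw [hT, ← cfc_comp' Real.sqrt (fun t : ℝ => t * t) S (by fun_prop) (by fun_prop), h2]

lemma hsNormSq_eq_traceNorm {H : Type*} [NormedAddCommGroup H] [InnerProductSpace ℂ H]
    [CompleteSpace H] {T S : H →L[ℂ] H} (hS : S.IsPositive) (hSS : S.comp S = T) :
    hsNormSqFn (fun x => S x) = traceNormFn (fun x => T x) := by
  have hsym : (S : H →ₗ[ℂ] H).IsSymmetric :=
    (ContinuousLinearMap.isSelfAdjoint_iff_isSymmetric).mp hS.isSelfAdjoint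
  have key1 : ∀ e f : H, ⟪f, T e⟫ = ⟪S f, S e⟫ := by
    intro e f
    rw [← hSS]
    exact (hsym f (S e)).symm
  have key2 : ∀ e : H, ENNReal.ofReal ‖⟪e, T e⟫‖ = ENNReal.ofReal (‖S e‖ ^ 2) := by
    intro e
    rw [key1, @inner_self_eq_norm_sq_to_K ℂ]
    norm_num [Real.norm_of_nonneg (norm_nonneg (S e))]
  apply le_antisymm
  · refine iSup_le fun n => iSup_le fun e => iSup_le fun he => ?_
    have heq : ∑ i, ENNReal.ofReal (‖S (e i)‖ ^ 2)
        = ∑ i, ENNReal.ofReal ‖⟪e i, T (e i)⟫‖ := by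
      refine Finset.sum_congr rfl fun i _ => (key2 (e i)).symm
    rw [heq]
    exact le_iSup_of_le n <| le_iSup_of_le e <| le_iSup_of_le e <|
      le_iSup_of_le he <| le_iSup_of_le he le_rfl
  · refine iSup_le fun n => iSup_le fun e => iSup_le fun f => iSup_le fun he =>
      iSup_le fun hf => ?_
    set h := hsNormSqFn (fun x => S x) with hh
    have hA : ∑ i, ENNReal.ofReal (‖S (e i)‖ ^ 2) ≤ h :=
      le_iSup_of_le n <| le_iSup_of_le e <| le_iSup_of_le he le_rfl
    have hB : ∑ i, ENNReal.ofReal (‖S (f i)‖ ^ 2) ≤ h :=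
      le_iSup_of_le n <| le_iSup_of_le f <| le_iSup_of_le hf le_rfl
    calc ∑ i, ENNReal.ofReal ‖⟪f i, T (e i)⟫‖
        ≤ ∑ i, (ENNReal.ofReal (‖S (f i)‖ ^ 2) / 2 + ENNReal.ofReal (‖S (e i)‖ ^ 2) / 2) := by
          refine Finset.sum_le_sum fun i _ => ?_
          have h1 : ‖⟪f i, T (e i)⟫‖ ≤ (‖S (f i)‖ ^ 2 + ‖S (e i)‖ ^ 2) / 2 := by
            rw [key1]
            refine (norm_inner_le_norm _ _).trans ?_
            nlinarith [sq_nonneg (‖S (f i)‖ - ‖S (e i)‖)]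
          refine (ENNReal.ofReal_le_ofReal h1).trans ?_
          rw [ENNReal.ofReal_div_of_pos (by norm_num),
            ENNReal.ofReal_add (by positivity) (by positivity), ENNReal.add_div]
          norm_num
      _ = (∑ i, ENNReal.ofReal (‖S (f i)‖ ^ 2)) / 2
            + (∑ i, ENNReal.ofReal (‖S (e i)‖ ^ 2)) / 2 := by
          rw [Finset.sum_add_distrib]
          simp only [div_eq_mul_inv, ← Finset.sum_mul]
      _ ≤ h / 2 + h / 2 := by
          gcongr
      _ = h := ENNReal.add_halves h

end SqrtAux

/-- If `Φ ∈ L¹(Λ, 𝒜, S₁⁺(H), μ)` then the pointwise square root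
`Φ^{1/2}` is measurable as an `S₂(H)`-valued function and belongs to
`L²(Λ, 𝒜, S₂(H), μ)`, with `‖Φ^{1/2}(λ)‖₂² = ‖Φ(λ)‖₁` for all `λ`. -/
theorem sqrt_mem_L2_of_mem_L1
    {Λ : Type*} [MeasurableSpace Λ] (μ : Measure Λ)
    {H : Type*} [NormedAddCommGroup H] [InnerProductSpace ℂ H] [CompleteSpace H]
    [TopologicalSpace.SeparableSpace H]
    (Φ : Λ → H →L[ℂ] H)
    (hmeas : ∀ x : H, StronglyMeasurable fun l => Φ l x)
    (hpos : ∀ l, (Φ l).IsPositive)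
    (htc : ∀ l, traceNormFn (fun x => Φ l x) < ⊤)
    (hint : (∫⁻ l, traceNormFn (fun x => Φ l x) ∂μ) < ⊤)
    (s : Λ → H →L[ℂ] H) (hs : IsSqrtFun Φ s) :
    (∀ x : H, StronglyMeasurable fun l => s l x) ∧
    (∫⁻ l, hsNormSqFn (fun x => s l x) ∂μ) < ⊤ ∧
    ∀ l, hsNormSqFn (fun x => s l x) = traceNormFn (fun x => Φ l x) := by
  have part3 : ∀ l, hsNormSqFn (fun x => s l x) = traceNormFn (fun x => Φ l x) :=
    fun l => hsNormSq_eq_traceNorm (hs l).1 (hs l).2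
  classical
  refine ⟨?_, ?_, part3⟩
  · intro x
    rcases subsingleton_or_nontrivial H with hH | hH
    · have heq : (fun l => s l x) = fun _ => 0 := funext fun l => Subsingleton.elim _ _
      rw [heq]; exact stronglyMeasurable_const
    obtain ⟨D, hDc, hDd⟩ := TopologicalSpace.exists_countable_dense H
    set An : ℕ → Set Λ := fun n => {l | ∀ y : H, ‖Φ l y‖ ≤ n * ‖y‖} with hAn
    have hAn_eq : ∀ n, An n = ⋂ y ∈ D, {l | ‖Φ l y‖ ≤ n * ‖y‖} := by
      intro n
      ext l
      simp only [Set.mem_iInter, Set.mem_setOf_eq, hAn]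
      constructor
      · exact fun h y _ => h y
      · intro h y
        have hC : IsClosed {y : H | ‖Φ l y‖ ≤ n * ‖y‖} :=
          isClosed_le (Φ l).continuous.norm (continuous_const.mul continuous_norm)
        have hsub : closure D ⊆ {y : H | ‖Φ l y‖ ≤ n * ‖y‖} :=
          hC.closure_subset_iff.mpr h
        exact hsub (hDd.closure_eq ▸ Set.mem_univ y)
    have hAn_meas : ∀ n, MeasurableSet (An n) := by
      intro n
      rw [hAn_eq]
      exact MeasurableSet.biInter hDc fun y _ =>
        measurableSet_le (hmeas y).norm.measurable measurable_const
    have hAn_ex : ∀ l, ∃ n, l ∈ An n := by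
      intro l
      refine ⟨⌈‖Φ l‖⌉₊, fun y => ((Φ l).le_opNorm y).trans ?_⟩
      exact mul_le_mul_of_nonneg_right (Nat.le_ceil _) (norm_nonneg y)
    set N : Λ → ℕ := fun l => Nat.find (hAn_ex l) with hNdef
    have hNmem : ∀ l, l ∈ An (N l) := fun l => Nat.find_spec (hAn_ex l)
    have hNop : ∀ l, ‖Φ l‖ ≤ N l := fun l =>
      (Φ l).opNorm_le_bound (by positivity) (hNmem l)
    have hNle : ∀ m, {l | N l ≤ m} = ⋃ k, ⋃ _ : k ≤ m, An k := by
      intro m; ext l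
      simp only [Set.mem_setOf_eq, Set.mem_iUnion, hNdef]
      rw [Nat.find_le_iff]
      exact ⟨fun ⟨k, hk, h⟩ => ⟨k, hk, h⟩, fun ⟨k, hk, h⟩ => ⟨k, hk, h⟩⟩
    have hNle_meas : ∀ m, MeasurableSet {l | N l ≤ m} := fun m => by
      rw [hNle]
      exact MeasurableSet.iUnion fun k => MeasurableSet.iUnion fun _ => hAn_meas k
    have hNmeas : Measurable N := by
      refine measurable_to_countable' fun m => ?_
      match m with
      | 0 =>
        have h0 : N ⁻¹' {0} = {l | N l ≤ 0} := by ext l; simp [Nat.le_zero]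
        rw [h0]; exact hNle_meas 0
      | (m + 1) =>
        have h1 : N ⁻¹' {m + 1} = {l | N l ≤ m + 1} \ {l | N l ≤ m} := by
          ext l; simp only [Set.mem_preimage, Set.mem_singleton_iff, Set.mem_diff,
            Set.mem_setOf_eq]; omega
        rw [h1]; exact (hNle_meas (m + 1)).diff (hNle_meas m)
    have hpex : ∀ n k : ℕ, ∃ q : Polynomial ℝ,
        ∀ t ∈ Set.Icc (0 : ℝ) n, |q.eval t - Real.sqrt t| < 1 / (k + 1) :=
      fun n k => exists_polynomial_near_of_continuousOn 0 n Real.sqrt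
        Real.continuous_sqrt.continuousOn _ (by positivity)
    choose p hp using hpex
    letI : MeasurableSpace H := borel H
    haveI : BorelSpace H := ⟨rfl⟩
    have hFm : ∀ k : ℕ, StronglyMeasurable fun l => (Polynomial.aeval (Φ l) (p (N l) k)) x := by
      intro k
      have heq : (fun l => (Polynomial.aeval (Φ l) (p (N l) k)) x)
          = (fun q : Λ × ℕ => (Polynomial.aeval (Φ q.1) (p q.2 k)) x) ∘ fun l => (l, N l) := rfl
      rw [heq]
      refine Measurable.stronglyMeasurable ?_
      have h1 : Measurable fun q : Λ × ℕ => (Polynomial.aeval (Φ q.1) (p q.2 k)) x :=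
        measurable_from_prod_countable_left fun m => (sm_aeval_apply Φ hmeas (p m k) x).measurable
      have h2 : Measurable fun l : Λ => (l, N l) := measurable_id.prodMk hNmeas
      exact h1.comp h2
    refine stronglyMeasurable_of_tendsto atTop hFm (tendsto_pi_nhds.mpr fun l => ?_)
    have hpos' : (0 : H →L[ℂ] H) ≤ Φ l :=
      (ContinuousLinearMap.nonneg_iff_isPositive _).mpr (hpos l)
    have hsl : s l = cfc Real.sqrt (Φ l) := isPositive_sqrt_eq_cfc (hs l).1 (hs l).2
    have hsa : IsSelfAdjoint (Φ l) := (hpos l).isSelfAdjoint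
    have hsp : ∀ t ∈ spectrum ℝ (Φ l), t ∈ Set.Icc (0 : ℝ) (N l) := by
      intro t ht
      refine ⟨spectrum_nonneg_of_nonneg hpos' ht, ?_⟩
      calc t ≤ ‖t‖ := Real.le_norm_self t
        _ ≤ ‖Φ l‖ := spectrum.norm_le_norm_of_mem ht
        _ ≤ N l := hNop l
    have hbound : ∀ k : ℕ,
        ‖(Polynomial.aeval (Φ l) (p (N l) k)) x - s l x‖ ≤ (1 / (k + 1 : ℝ)) * ‖x‖ := by
      intro k
      have hdiff : Polynomial.aeval (Φ l) (p (N l) k) - s l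
          = cfc (fun t => (p (N l) k).eval t - Real.sqrt t) (Φ l) := by
        rw [hsl, ← cfc_polynomial (p (N l) k) (Φ l),
          ← cfc_sub (fun t => (p (N l) k).eval t) Real.sqrt (Φ l) (by fun_prop) (by fun_prop)]
      calc ‖(Polynomial.aeval (Φ l) (p (N l) k)) x - s l x‖
          = ‖(Polynomial.aeval (Φ l) (p (N l) k) - s l) x‖ := by
            rw [ContinuousLinearMap.sub_apply]
        _ ≤ ‖Polynomial.aeval (Φ l) (p (N l) k) - s l‖ * ‖x‖ :=
            (Polynomial.aeval (Φ l) (p (N l) k) - s l).le_opNorm x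
        _ ≤ (1 / (k + 1 : ℝ)) * ‖x‖ := by
            refine mul_le_mul_of_nonneg_right ?_ (norm_nonneg x)
            rw [hdiff]
            refine norm_cfc_le (by positivity) fun t ht => ?_
            rw [Real.norm_eq_abs]
            exact (hp (N l) k t (hsp t ht)).le
    rw [tendsto_iff_norm_sub_tendsto_zero]
    refine squeeze_zero (fun k => norm_nonneg _) hbound ?_
    have := tendsto_one_div_add_atTop_nhds_zero_nat.mul_const ‖x‖
    simpa using this
  · have heq : (∫⁻ l, hsNormSqFn (fun x => s l x) ∂μ)
        = ∫⁻ l, traceNormFn (fun x => Φ l x) ∂μ := lintegral_congr fun l => part3 l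
    rw [heq]; exact hint

end OVM
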